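/- Let a > 0, α > 0, δ > 0, and let g₁ : (0,2) → (0,∞) satisfy g₁(t) = a·t^α + q(t) with q ∈ Q_{α,α}. Then the function t ↦ g₁(t)^δ − a^δ·t^{αδ}, defined on (0,2), belongs to Q_{αδ, αδ}. -/

import Mathlib

/-!
Multiplication by `c t^γ` maps `Q_{β,β}` to `Q_{γ+β,γ+β}`, so with `u = q / (a t^α) ∈ Q_{0,0}`
and `g₁^δ - a^δ t^{αδ} = a^δ t^{αδ} ((1 + u)^δ - 1)` it suffices to show that `(1 + u)^δ - 1`
lies in `Q_{0,0}`. Split `u = v + w` with `v ∈ P_{0,0}`, `w ∈ R_γ`, and expand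
`(1 + u)^δ = ∑_{k < N} binom(δ, k) u^k + ρ_N(u)`. The powers `v^k` (`k ≥ 1`) stay in `P_{0,0}`,
the differences `u^k - v^k` lie in `R_γ`, and, as `u ∈ R_σ` for some `σ > 0`, the remainder
`ρ_N(u)` lies in `R_{Nσ}`: induct on the order of differentiation, using
`(ρ_N^{(j)} ∘ u)' = (ρ_N^{(j+1)} ∘ u) u'` and `ρ_N^{(j)}(x) = O(x^{N-j})` at `0`.
-/

open Set

noncomputable section

/-- `P_{α,β}`: finite sums of real powers `t^{α_i}` on `(0,2)`, where integer exponents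
exceed `α` and non-integer exponents exceed `β`. -/
def Pclass (α β : ℝ) : Set (ℝ → ℝ) :=
  { f | ∃ (n : ℕ) (a : Fin n → ℝ) (e : Fin n → ℝ),
      (∀ i, (∃ z : ℤ, e i = (z : ℝ)) → α < e i) ∧
      (∀ i, (¬ ∃ z : ℤ, e i = (z : ℝ)) → β < e i) ∧
      (∀ t ∈ Set.Ioo (0 : ℝ) 2, f t = ∑ i, a i * t ^ (e i)) }

/-- `R_{γ'}`: functions that are `C^∞` on `(0,2)` and whose `m`-th derivatives are
`O(t^{γ'-m})` as `t ↓ 0`. -/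
def Rclass (γ' : ℝ) : Set (ℝ → ℝ) :=
  { f | ContDiffOn ℝ (⊤ : ℕ∞) f (Set.Ioo (0 : ℝ) 2) ∧
      ∀ m : ℕ, ∃ C : ℝ, ∃ ε > (0 : ℝ), ∀ t ∈ Set.Ioo (0 : ℝ) (min ε 2),
        |iteratedDerivWithin m f (Set.Ioo (0 : ℝ) 2) t| ≤ C * t ^ (γ' - m) }

/-- `Q_{α,β} = ∩_{γ'} (P_{α,β} + R_{γ'})` (as functions on `(0,2)`). -/
def Qclass (α β : ℝ) : Set (ℝ → ℝ) :=
  { f | ∀ γ' : ℝ, ∃ p ∈ Pclass α β, ∃ r ∈ Rclass γ',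
      ∀ t ∈ Set.Ioo (0 : ℝ) 2, f t = p t + r t }

open Filter Topology Asymptotics

lemma isBigO_rpow_nhdsGT_zero_iff {D : ℝ → ℝ} {β : ℝ} :
    D =O[𝓝[>] 0] (fun t => t ^ β) ↔
      ∃ C : ℝ, ∃ ε > (0 : ℝ), ∀ t ∈ Ioo (0 : ℝ) (min ε 2), |D t| ≤ C * t ^ β := by
  rw [isBigO_iff]
  constructor
  · rintro ⟨C, hC⟩
    obtain ⟨ε, hε, hCε⟩ := (nhdsGT_basis (0 : ℝ)).eventually_iff.1 hC
    refine ⟨C, ε, hε, fun t ht => ?_⟩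
    have h := hCε ⟨ht.1, ht.2.trans_le (min_le_left _ _)⟩
    rwa [Real.norm_eq_abs, Real.norm_of_nonneg (Real.rpow_nonneg ht.1.le _)] at h
  · rintro ⟨C, ε, hε, hCε⟩
    refine ⟨C, (nhdsGT_basis (0 : ℝ)).eventually_iff.2 ⟨min ε 2, by positivity, fun t ht => ?_⟩⟩
    rw [Real.norm_eq_abs, Real.norm_of_nonneg (Real.rpow_nonneg ht.1.le _)]
    exact hCε t ht

lemma mem_Rclass_iff {γ : ℝ} {f : ℝ → ℝ} :
    f ∈ Rclass γ ↔ ContDiffOn ℝ (⊤ : ℕ∞) f (Ioo 0 2) ∧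
      ∀ m : ℕ, iteratedDerivWithin m f (Ioo 0 2) =O[𝓝[>] 0] fun t => t ^ (γ - m) := by
  simp only [isBigO_rpow_nhdsGT_zero_iff]
  rfl

lemma isBigO_rpow_nhdsGT_zero_of_le {a b : ℝ} (h : b ≤ a) :
    (fun t : ℝ => t ^ a) =O[𝓝[>] 0] fun t => t ^ b := by
  refine IsBigO.of_bound 1 ?_
  filter_upwards [Ioo_mem_nhdsGT one_pos] with t ht
  rw [one_mul, Real.norm_of_nonneg (Real.rpow_nonneg ht.1.le _),
    Real.norm_of_nonneg (Real.rpow_nonneg ht.1.le _)]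
  exact Real.rpow_le_rpow_of_exponent_ge ht.1 ht.2.le h

lemma eventually_mem_Ioo_zero_two : ∀ᶠ t in 𝓝[>] (0 : ℝ), t ∈ Ioo (0 : ℝ) 2 :=
  Ioo_mem_nhdsGT two_pos

lemma ContDiffOn.contDiffWithinAt_nat {f : ℝ → ℝ} {s : Set ℝ} (hf : ContDiffOn ℝ (⊤ : ℕ∞) f s)
    (m : ℕ) {t : ℝ} (ht : t ∈ s) : ContDiffWithinAt ℝ m f s t :=
  (hf t ht).of_le (by exact_mod_cast le_top)

lemma isBigO_iteratedDerivWithin_mul {f g : ℝ → ℝ} {γ₁ γ₂ : ℝ} {m : ℕ}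
    (hf : ContDiffOn ℝ (⊤ : ℕ∞) f (Ioo 0 2)) (hg : ContDiffOn ℝ (⊤ : ℕ∞) g (Ioo 0 2))
    (hfm : ∀ i ≤ m, iteratedDerivWithin i f (Ioo 0 2) =O[𝓝[>] 0] fun t => t ^ (γ₁ - i))
    (hgm : ∀ i ≤ m, iteratedDerivWithin i g (Ioo 0 2) =O[𝓝[>] 0] fun t => t ^ (γ₂ - i)) :
    iteratedDerivWithin m (fun t => f t * g t) (Ioo 0 2) =O[𝓝[>] 0]
      fun t => t ^ (γ₁ + γ₂ - m) := by
  have hterm : ∀ i ∈ Finset.range (m + 1),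
      (fun t => (m.choose i : ℝ) * iteratedDerivWithin i f (Ioo 0 2) t *
        iteratedDerivWithin (m - i) g (Ioo 0 2) t) =O[𝓝[>] 0] fun t => t ^ (γ₁ + γ₂ - m) := by
    intro i hi
    have hi : i ≤ m := Nat.lt_succ_iff.mp (Finset.mem_range.mp hi)
    refine (((hfm i hi).const_mul_left _).mul (hgm (m - i) (Nat.sub_le m i))).congr'
      EventuallyEq.rfl ?_
    filter_upwards [eventually_mem_Ioo_zero_two] with t ht
    rw [← Real.rpow_add ht.1, Nat.cast_sub hi]
    ring_nf
  refine (IsBigO.sum hterm).congr' ?_ EventuallyEq.rfl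
  filter_upwards [eventually_mem_Ioo_zero_two] with t ht
  rw [Finset.sum_apply, ← iteratedDerivWithin_mul ht (uniqueDiffOn_Ioo 0 2)
    (hf.contDiffWithinAt_nat m ht) (hg.contDiffWithinAt_nat m ht)]
  rfl

lemma Rclass_anti : Antitone Rclass := by
  intro γ₂ γ₁ h f hf
  rw [mem_Rclass_iff] at hf ⊢
  exact ⟨hf.1, fun m => (hf.2 m).trans (isBigO_rpow_nhdsGT_zero_of_le (by linarith))⟩

lemma rpow_mem_Rclass (β : ℝ) : (fun t : ℝ => t ^ β) ∈ Rclass β := by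
  rw [mem_Rclass_iff]
  refine ⟨fun t ht => (Real.contDiffAt_rpow_const_of_ne ht.1.ne').contDiffWithinAt,
    fun m => ?_⟩
  refine (isBigO_const_mul_self ((descPochhammer ℝ m).eval β) _ _).congr' ?_ EventuallyEq.rfl
  filter_upwards [eventually_mem_Ioo_zero_two] with t ht
  rw [iteratedDerivWithin_of_isOpen_eq_iterate isOpen_Ioo ht, Real.iter_deriv_rpow_const]

namespace Rclass

variable {γ γ₁ γ₂ σ : ℝ} {f g : ℝ → ℝ}

lemma mem_of_eqOn (hfg : EqOn f g (Ioo 0 2)) (hf : f ∈ Rclass γ) : g ∈ Rclass γ := by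
  rw [mem_Rclass_iff] at hf ⊢
  refine ⟨hf.1.congr hfg.symm, fun m => (hf.2 m).congr' ?_ EventuallyEq.rfl⟩
  filter_upwards [eventually_mem_Ioo_zero_two] with t ht
  exact iteratedDerivWithin_congr hfg ht

lemma add_mem (hf : f ∈ Rclass γ) (hg : g ∈ Rclass γ) : (fun t => f t + g t) ∈ Rclass γ := by
  rw [mem_Rclass_iff] at hf hg ⊢
  refine ⟨hf.1.add hg.1, fun m => ((hf.2 m).add (hg.2 m)).congr' ?_ EventuallyEq.rfl⟩
  filter_upwards [eventually_mem_Ioo_zero_two] with t ht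
  exact (iteratedDerivWithin_fun_add ht (uniqueDiffOn_Ioo 0 2)
    (hf.1.contDiffWithinAt_nat m ht) (hg.1.contDiffWithinAt_nat m ht)).symm

lemma const_mul_mem (c : ℝ) (hf : f ∈ Rclass γ) : (fun t => c * f t) ∈ Rclass γ := by
  rw [mem_Rclass_iff] at hf ⊢
  refine ⟨contDiffOn_const.mul hf.1, fun m => ?_⟩
  have hD : iteratedDerivWithin m (fun t => c * f t) (Ioo 0 2) =
      fun t => c * iteratedDerivWithin m f (Ioo 0 2) t :=
    funext fun t => iteratedDerivWithin_const_mul_field c f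
  exact hD ▸ (hf.2 m).const_mul_left c

lemma mul_mem (hf : f ∈ Rclass γ₁) (hg : g ∈ Rclass γ₂) :
    (fun t => f t * g t) ∈ Rclass (γ₁ + γ₂) := by
  rw [mem_Rclass_iff] at hf hg ⊢
  exact ⟨hf.1.mul hg.1, fun m =>
    isBigO_iteratedDerivWithin_mul hf.1 hg.1 (fun i _ => hf.2 i) (fun i _ => hg.2 i)⟩

lemma const_mem (c : ℝ) : (fun _ : ℝ => c) ∈ Rclass 0 :=
  mem_of_eqOn (fun t _ => by simp) (const_mul_mem c (rpow_mem_Rclass 0))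

lemma zero_mem (γ : ℝ) : (fun _ : ℝ => (0 : ℝ)) ∈ Rclass γ :=
  mem_of_eqOn (fun t _ => by simp) (const_mul_mem 0 (rpow_mem_Rclass γ))

lemma sum_mem {ι : Type*} (s : Finset ι) {F : ι → ℝ → ℝ} (hF : ∀ i ∈ s, F i ∈ Rclass γ) :
    (fun t => ∑ i ∈ s, F i t) ∈ Rclass γ := by
  classical
  induction s using Finset.induction_on with
  | empty => simpa using zero_mem γ
  | insert i s hi ih =>
    rw [Finset.forall_mem_insert] at hF
    simpa only [Finset.sum_insert hi] using add_mem hF.1 (ih hF.2)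

lemma pow_mem (hf : f ∈ Rclass γ) (k : ℕ) : (fun t => f t ^ k) ∈ Rclass (k * γ) := by
  induction k with
  | zero => simpa using const_mem 1
  | succ k ih =>
    have h := mul_mem ih hf
    rw [← add_one_mul] at h
    simpa only [Nat.cast_succ, ← pow_succ] using h

lemma pow_sub_pow_mem (hf : f ∈ Rclass 0) (hg : g ∈ Rclass 0)
    (hfg : (fun t => f t - g t) ∈ Rclass γ) (k : ℕ) : (fun t => f t ^ k - g t ^ k) ∈ Rclass γ := by
  induction k with
  | zero => simpa using zero_mem γ
  | succ k ih =>
    have h₁ := mul_mem hf ih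
    have h₂ := mul_mem hfg (pow_mem hg k)
    rw [zero_add] at h₁
    rw [mul_zero, add_zero] at h₂
    exact mem_of_eqOn (fun t _ => by ring) (add_mem h₁ h₂)

lemma derivWithin_mem (hf : f ∈ Rclass γ) : derivWithin f (Ioo 0 2) ∈ Rclass (γ - 1) := by
  rw [mem_Rclass_iff] at hf ⊢
  refine ⟨hf.1.derivWithin (uniqueDiffOn_Ioo 0 2) (by simp), fun m => ?_⟩
  rw [← iteratedDerivWithin_succ']
  convert hf.2 (m + 1) using 3
  push_cast
  ring

lemma tendsto_zero (hσ : 0 < σ) (hf : f ∈ Rclass σ) : Tendsto f (𝓝[>] 0) (𝓝 0) := by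
  have h := ((mem_Rclass_iff.1 hf).2 0)
  rw [iteratedDerivWithin_zero, Nat.cast_zero, sub_zero] at h
  refine h.trans_tendsto ?_
  simpa [Real.zero_rpow hσ.ne'] using
    ((Real.continuousAt_rpow_const 0 σ (Or.inr hσ.le)).tendsto).mono_left nhdsWithin_le_nhds

end Rclass

lemma mem_Pclass_self_iff {β : ℝ} {f : ℝ → ℝ} :
    f ∈ Pclass β β ↔ ∃ (n : ℕ) (c e : Fin n → ℝ),
      (∀ i, β < e i) ∧ ∀ t ∈ Ioo (0 : ℝ) 2, f t = ∑ i, c i * t ^ e i := by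
  constructor
  · rintro ⟨n, c, e, hint, hnonint, hf⟩
    exact ⟨n, c, e, fun i => (em _).elim (hint i) (hnonint i), hf⟩
  · rintro ⟨n, c, e, he, hf⟩
    exact ⟨n, c, e, fun i _ => he i, fun i _ => he i, hf⟩

namespace Pclass

variable {β β₁ β₂ : ℝ} {f g : ℝ → ℝ}

lemma mem_of_eqOn (hfg : EqOn f g (Ioo 0 2)) (hf : f ∈ Pclass β β) : g ∈ Pclass β β := by
  obtain ⟨n, c, e, he, hf⟩ := mem_Pclass_self_iff.1 hf
  exact mem_Pclass_self_iff.2 ⟨n, c, e, he, fun t ht => (hfg ht) ▸ hf t ht⟩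

lemma zero_mem (β : ℝ) : (fun _ : ℝ => (0 : ℝ)) ∈ Pclass β β :=
  mem_Pclass_self_iff.2 ⟨0, Fin.elim0, Fin.elim0, Fin.rec0, fun t _ => by simp⟩

lemma add_mem (hf : f ∈ Pclass β β) (hg : g ∈ Pclass β β) :
    (fun t => f t + g t) ∈ Pclass β β := by
  obtain ⟨n₁, c₁, e₁, he₁, hf⟩ := mem_Pclass_self_iff.1 hf
  obtain ⟨n₂, c₂, e₂, he₂, hg⟩ := mem_Pclass_self_iff.1 hg
  refine mem_Pclass_self_iff.2 ⟨n₁ + n₂, Fin.append c₁ c₂, Fin.append e₁ e₂,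
    Fin.addCases (by simpa using he₁) (by simpa using he₂), fun t ht => ?_⟩
  simp [Fin.sum_univ_add, hf t ht, hg t ht]

lemma sum_mem {ι : Type*} (s : Finset ι) {F : ι → ℝ → ℝ} (hF : ∀ i ∈ s, F i ∈ Pclass β β) :
    (fun t => ∑ i ∈ s, F i t) ∈ Pclass β β := by
  classical
  induction s using Finset.induction_on with
  | empty => simpa using zero_mem β
  | insert i s hi ih =>
    rw [Finset.forall_mem_insert] at hF
    simpa only [Finset.sum_insert hi] using add_mem hF.1 (ih hF.2)

lemma mul_mem (hf : f ∈ Pclass β₁ β₁) (hg : g ∈ Pclass β₂ β₂) :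
    (fun t => f t * g t) ∈ Pclass (β₁ + β₂) (β₁ + β₂) := by
  obtain ⟨n₁, c₁, e₁, he₁, hf⟩ := mem_Pclass_self_iff.1 hf
  obtain ⟨n₂, c₂, e₂, he₂, hg⟩ := mem_Pclass_self_iff.1 hg
  let ij : Fin (n₁ * n₂) ≃ Fin n₁ × Fin n₂ := finProdFinEquiv.symm
  refine mem_Pclass_self_iff.2 ⟨n₁ * n₂, fun k => c₁ (ij k).1 * c₂ (ij k).2,
    fun k => e₁ (ij k).1 + e₂ (ij k).2, fun k => add_lt_add (he₁ _) (he₂ _), fun t ht => ?_⟩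
  rw [hf t ht, hg t ht, Finset.sum_mul_sum, ← Fintype.sum_prod_type',
    ← ij.symm.sum_comp]
  refine Finset.sum_congr rfl fun k _ => ?_
  simp only [Equiv.apply_symm_apply, Real.rpow_add ht.1]
  ring

lemma pow_succ_mem (hf : f ∈ Pclass β β) (k : ℕ) :
    (fun t => f t ^ (k + 1)) ∈ Pclass ((k + 1) * β) ((k + 1) * β) := by
  induction k with
  | zero => simpa using hf
  | succ k ih =>
    have h := mul_mem ih hf
    rw [← add_one_mul] at h
    simpa only [Nat.cast_succ, ← pow_succ] using h

lemma const_mul_rpow_mul_mem (c γ : ℝ) (hf : f ∈ Pclass β β) :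
    (fun t => c * t ^ γ * f t) ∈ Pclass (γ + β) (γ + β) := by
  obtain ⟨n, a, e, he, hf⟩ := mem_Pclass_self_iff.1 hf
  refine mem_Pclass_self_iff.2 ⟨n, fun i => c * a i, fun i => γ + e i,
    fun i => add_lt_add_right (he i) γ, fun t ht => ?_⟩
  simp only [hf t ht, Finset.mul_sum, Real.rpow_add ht.1]
  exact Finset.sum_congr rfl fun i _ => by ring

lemma const_mul_mem (c : ℝ) (hf : f ∈ Pclass β β) :
    (fun t => c * f t) ∈ Pclass β β := by
  simpa using const_mul_rpow_mul_mem c 0 hf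

lemma exists_mem_Rclass (hf : f ∈ Pclass β β) : ∃ σ > β, f ∈ Rclass σ := by
  obtain ⟨n, c, e, he, hf⟩ := mem_Pclass_self_iff.1 hf
  obtain ⟨σ, hσe, hσβ⟩ := (((eventually_all.2 fun i => eventually_lt_nhds (he i)).filter_mono
    nhdsWithin_le_nhds).and (self_mem_nhdsWithin (s := Ioi β))).exists
  refine ⟨σ, hσβ, Rclass.mem_of_eqOn (fun t ht => (hf t ht).symm) (Rclass.sum_mem _ ?_)⟩
  exact fun i _ => Rclass_anti (hσe i).le (Rclass.const_mul_mem _ (rpow_mem_Rclass _))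

end Pclass

lemma isBigO_pow_succ_of_hasDerivAt {f g : ℝ → ℝ} {n : ℕ} (hf0 : f 0 = 0)
    (hfg : ∀ᶠ x in 𝓝 0, HasDerivAt f (g x) x) (hg : g =O[𝓝 0] fun x => x ^ n) :
    f =O[𝓝 0] fun x => x ^ (n + 1) := by
  obtain ⟨C, hC, hgC⟩ := hg.exists_pos
  obtain ⟨ε, hε, hball⟩ := Metric.eventually_nhds_iff_ball.1 (hfg.and hgC.bound)
  refine IsBigO.of_bound C (Metric.eventually_nhds_iff_ball.2 ⟨ε, hε, fun x hx => ?_⟩)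
  have hsub : Metric.closedBall (0 : ℝ) ‖x‖ ⊆ Metric.ball 0 ε :=
    Metric.closedBall_subset_ball (by simpa using hx)
  have hmvt := Convex.norm_image_sub_le_of_norm_hasDerivWithin_le (f' := g)
    (s := Metric.closedBall (0 : ℝ) ‖x‖) (x := 0) (y := x) (C := C * ‖x‖ ^ n)
    (fun y hy => (hball y (hsub hy)).1.hasDerivWithinAt)
    (fun y hy => (hball y (hsub hy)).2.trans (by
      rw [norm_pow]
      gcongr
      simpa using hy))
    (convex_closedBall 0 ‖x‖) (Metric.mem_closedBall_self (norm_nonneg x)) (by simp)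
  rw [hf0, sub_zero, sub_zero] at hmvt
  rw [norm_pow, pow_succ, ← mul_assoc]
  exact hmvt

lemma isBigO_pow_of_hasDerivAt_family {F : ℕ → ℝ → ℝ} {N : ℕ}
    (hF : ∀ j, ∀ᶠ x in 𝓝 0, HasDerivAt (F j) (F (j + 1) x) x) (hF0 : ∀ j < N, F j 0 = 0)
    (j : ℕ) : F j =O[𝓝 0] fun x => x ^ (N - j) := by
  induction h : N - j generalizing j with
  | zero =>
    simpa using ((hF j).self_of_nhds.continuousAt.tendsto).isBigO_one ℝ
  | succ d ih =>
    exact isBigO_pow_succ_of_hasDerivAt (hF0 j (by omega)) (hF j) (ih (j + 1) (by omega))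

lemma contDiffOn_of_hasDerivAt_family {F : ℕ → ℝ → ℝ} {U : Set ℝ} (hU : IsOpen U)
    (hF : ∀ j, ∀ x ∈ U, HasDerivAt (F j) (F (j + 1) x) x) (j : ℕ) :
    ContDiffOn ℝ (⊤ : ℕ∞) (F j) U := by
  refine contDiffOn_infty.2 fun n => ?_
  induction n generalizing j with
  | zero => exact contDiffOn_zero.2 fun x hx => (hF j x hx).continuousAt.continuousWithinAt
  | succ n ih =>
    rw [Nat.cast_succ, contDiffOn_succ_iff_deriv_of_isOpen hU]
    exact ⟨fun x hx => (hF j x hx).differentiableAt.differentiableWithinAt, by simp,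
      (ih (j + 1)).congr fun x hx => (hF j x hx).deriv⟩

lemma derivWithin_comp_eqOn {F F' u : ℝ → ℝ} {U : Set ℝ}
    (hF : ∀ x ∈ U, HasDerivAt F (F' x) x) (hu : ContDiffOn ℝ (⊤ : ℕ∞) u (Ioo 0 2))
    (huU : MapsTo u (Ioo 0 2) U) :
    EqOn (derivWithin (fun t => F (u t)) (Ioo 0 2))
      (fun t => F' (u t) * derivWithin u (Ioo 0 2) t) (Ioo 0 2) := by
  intro t ht
  have hut : HasDerivAt u (derivWithin u (Ioo 0 2) t) t := by
    rw [derivWithin_of_isOpen isOpen_Ioo ht]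
    exact ((hu.contDiffAt (isOpen_Ioo.mem_nhds ht)).differentiableAt (by simp)).hasDerivAt
  rw [derivWithin_of_isOpen isOpen_Ioo ht]
  exact ((hF (u t) (huU ht)).comp t hut).deriv

theorem Rclass.comp_mem_of_isBigO_pow {F : ℕ → ℝ → ℝ} {U : Set ℝ} (hU : IsOpen U)
    (hF : ∀ j, ∀ x ∈ U, HasDerivAt (F j) (F (j + 1) x) x) {N : ℕ}
    (hFN : ∀ j, F j =O[𝓝 0] fun x => x ^ (N - j)) {σ : ℝ} (hσ : 0 < σ) {u : ℝ → ℝ}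
    (hu : u ∈ Rclass σ) (huU : MapsTo u (Ioo 0 2) U) (j : ℕ) :
    (fun t => F j (u t)) ∈ Rclass ((N - j : ℕ) * σ) := by
  have hsmooth : ∀ j, ContDiffOn ℝ (⊤ : ℕ∞) (fun t => F j (u t)) (Ioo 0 2) := fun j =>
    (contDiffOn_of_hasDerivAt_family hU hF j).comp (mem_Rclass_iff.1 hu).1 huU
  have hu' := mem_Rclass_iff.1 (Rclass.derivWithin_mem hu)
  refine mem_Rclass_iff.2 ⟨hsmooth j, fun m => ?_⟩
  induction m using Nat.strong_induction_on generalizing j with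
  | _ m ih =>
    rcases m with _ | m
    · have hu0 := (mem_Rclass_iff.1 hu).2 0
      simp only [iteratedDerivWithin_zero, Nat.cast_zero, sub_zero] at hu0 ⊢
      refine (((hFN j).comp_tendsto (Rclass.tendsto_zero hσ hu)).trans
        (hu0.pow (N - j))).congr' EventuallyEq.rfl ?_
      filter_upwards [eventually_mem_Ioo_zero_two] with t ht
      rw [← Real.rpow_natCast, ← Real.rpow_mul ht.1.le, mul_comm]
    · have hprod := isBigO_iteratedDerivWithin_mul (hsmooth (j + 1)) hu'.1
        (fun i hi => ih i (Nat.lt_succ_of_le hi) (j + 1)) (fun i _ => hu'.2 i)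
      refine (hprod.trans (isBigO_rpow_nhdsGT_zero_of_le ?_)).congr' ?_ EventuallyEq.rfl
      · have : ((N - j : ℕ) : ℝ) ≤ (N - (j + 1) : ℕ) + 1 := by norm_cast; omega
        push_cast
        nlinarith
      · filter_upwards [eventually_mem_Ioo_zero_two] with t ht
        rw [iteratedDerivWithin_succ']
        exact (iteratedDerivWithin_congr
          (derivWithin_comp_eqOn (hF j) (mem_Rclass_iff.1 hu).1 huU) ht).symm

def binomialTaylor (δ : ℝ) (N : ℕ) : Polynomial ℝ :=
  ∑ k ∈ Finset.range N,
    Polynomial.C ((descPochhammer ℝ k).eval δ / k.factorial) * Polynomial.X ^ k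

/-- On `x > -1`, the `j`-th derivative of the remainder `(1 + x) ^ δ - (binomialTaylor δ N).eval x`
of the binomial series, `binomialTaylor δ N` being its Taylor polynomial of degree `< N` at `0`. -/
def binomialRemainder (δ : ℝ) (N j : ℕ) (x : ℝ) : ℝ :=
  (descPochhammer ℝ j).eval δ * (1 + x) ^ (δ - j) -
    (Polynomial.derivative^[j] (binomialTaylor δ N)).eval x

lemma one_add_rpow_eq_sum_add_binomialRemainder (δ : ℝ) (N : ℕ) (x : ℝ) :
    (1 + x) ^ δ = ∑ k ∈ Finset.range N, (descPochhammer ℝ k).eval δ / k.factorial * x ^ k +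
      binomialRemainder δ N 0 x := by
  simp [binomialRemainder, binomialTaylor, Polynomial.eval_finsetSum]

lemma hasDerivAt_binomialRemainder (δ : ℝ) (N j : ℕ) {x : ℝ} (hx : -1 < x) :
    HasDerivAt (binomialRemainder δ N j) (binomialRemainder δ N (j + 1) x) x := by
  have hpow : HasDerivAt (fun x => (1 + x) ^ (δ - j)) ((δ - j) * (1 + x) ^ (δ - j - 1)) x := by
    simpa using ((hasDerivAt_id x).const_add 1).rpow_const (p := δ - j)
      (Or.inl (by rw [id]; linarith : (0 : ℝ) < 1 + id x).ne')
  refine ((hpow.const_mul ((descPochhammer ℝ j).eval δ)).sub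
    (Polynomial.hasDerivAt (Polynomial.derivative^[j] (binomialTaylor δ N)) x)).congr_deriv ?_
  simp only [binomialRemainder, descPochhammer_succ_eval, Function.iterate_succ_apply',
    Nat.cast_succ]
  ring_nf

lemma binomialRemainder_apply_zero {δ : ℝ} {N j : ℕ} (hj : j < N) :
    binomialRemainder δ N j 0 = 0 := by
  rw [binomialRemainder, ← Polynomial.coeff_zero_eq_eval_zero, Polynomial.coeff_iterate_derivative]
  simp [binomialTaylor, hj, Nat.descFactorial_self, mul_div_cancel₀, Nat.factorial_ne_zero]

lemma binomialRemainder_comp_mem_Rclass (δ : ℝ) (N : ℕ) {σ : ℝ} (hσ : 0 < σ) {u : ℝ → ℝ}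
    (hu : u ∈ Rclass σ) (hu₁ : ∀ t ∈ Ioo (0 : ℝ) 2, -1 < u t) :
    (fun t => binomialRemainder δ N 0 (u t)) ∈ Rclass (N * σ) := by
  have hderiv : ∀ j, ∀ x ∈ Ioi (-1 : ℝ),
      HasDerivAt (binomialRemainder δ N j) (binomialRemainder δ N (j + 1) x) x :=
    fun j x hx => hasDerivAt_binomialRemainder δ N j hx
  have hbound := isBigO_pow_of_hasDerivAt_family
    (fun j => eventually_of_mem (Ioi_mem_nhds (by norm_num)) (hderiv j))
    (fun j hj => binomialRemainder_apply_zero (δ := δ) hj)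
  simpa using Rclass.comp_mem_of_isBigO_pow isOpen_Ioi hderiv hbound hσ hu hu₁ 0

lemma exists_one_add_rpow_sub_one_eq_add (δ : ℝ) {σ γ Γ : ℝ} (hσ : 0 < σ) (hΓ : Γ ≤ γ)
    {u v : ℝ → ℝ} (hu : u ∈ Rclass σ) (hu₁ : ∀ t ∈ Ioo (0 : ℝ) 2, -1 < u t)
    (hv : v ∈ Pclass 0 0) (huv : (fun t => u t - v t) ∈ Rclass γ) :
    ∃ p ∈ Pclass 0 0, ∃ r ∈ Rclass Γ, ∀ t ∈ Ioo (0 : ℝ) 2, (1 + u t) ^ δ - 1 = p t + r t := by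
  obtain ⟨n, hn⟩ := exists_nat_ge (Γ / σ)
  have hnσ : Γ ≤ (n + 1 : ℕ) * σ := by
    rw [div_le_iff₀ hσ] at hn
    push_cast
    linarith
  set c : ℕ → ℝ := fun k => (descPochhammer ℝ k).eval δ / k.factorial
  have hu₀ : u ∈ Rclass 0 := Rclass_anti hσ.le hu
  have hv₀ : v ∈ Rclass 0 := by
    obtain ⟨σ₀, hσ₀, hvσ₀⟩ := Pclass.exists_mem_Rclass hv
    exact Rclass_anti hσ₀.le hvσ₀
  refine ⟨fun t => ∑ k ∈ Finset.range n, c (k + 1) * v t ^ (k + 1),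
    Pclass.sum_mem _ fun k _ => Pclass.const_mul_mem _ (by simpa using Pclass.pow_succ_mem hv k),
    fun t => ∑ k ∈ Finset.range n, c (k + 1) * (u t ^ (k + 1) - v t ^ (k + 1)) +
      binomialRemainder δ (n + 1) 0 (u t),
    Rclass.add_mem (Rclass.sum_mem _ fun k _ => Rclass.const_mul_mem _
        (Rclass_anti hΓ (Rclass.pow_sub_pow_mem hu₀ hv₀ huv (k + 1))))
      (Rclass_anti hnσ (binomialRemainder_comp_mem_Rclass δ (n + 1) hσ hu hu₁)),
    fun t _ => ?_⟩
  have hsplit : ∑ k ∈ Finset.range n, c (k + 1) * u t ^ (k + 1) =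
      ∑ k ∈ Finset.range n, c (k + 1) * v t ^ (k + 1) +
        ∑ k ∈ Finset.range n, c (k + 1) * (u t ^ (k + 1) - v t ^ (k + 1)) := by
    rw [← Finset.sum_add_distrib]
    exact Finset.sum_congr rfl fun k _ => by ring
  rw [one_add_rpow_eq_sum_add_binomialRemainder δ (n + 1), Finset.sum_range_succ', hsplit]
  simp [c]
  ring

namespace Qclass

variable {β : ℝ} {f g : ℝ → ℝ}

lemma mem_of_eqOn {α : ℝ} (hfg : EqOn f g (Ioo 0 2)) (hf : f ∈ Qclass α β) : g ∈ Qclass α β := by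
  intro Γ
  obtain ⟨p, hp, r, hr, hf⟩ := hf Γ
  exact ⟨p, hp, r, hr, fun t ht => hfg ht ▸ hf t ht⟩

lemma const_mul_rpow_mul_mem (c γ : ℝ) (hf : f ∈ Qclass β β) :
    (fun t => c * t ^ γ * f t) ∈ Qclass (γ + β) (γ + β) := by
  intro Γ
  obtain ⟨p, hp, r, hr, hf⟩ := hf (Γ - γ)
  have hr' := Rclass.mul_mem (Rclass.const_mul_mem c (rpow_mem_Rclass γ)) hr
  rw [add_sub_cancel] at hr'
  exact ⟨_, Pclass.const_mul_rpow_mul_mem c γ hp, _, hr', fun t ht => by simp only [hf t ht]; ring⟩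

lemma one_add_rpow_sub_one_mem (δ : ℝ) (hf : f ∈ Qclass 0 0)
    (hf₁ : ∀ t ∈ Ioo (0 : ℝ) 2, -1 < f t) : (fun t => (1 + f t) ^ δ - 1) ∈ Qclass 0 0 := by
  intro Γ
  obtain ⟨p, hp, r, hr, hf⟩ := hf (max Γ 1)
  obtain ⟨σ, hσ, hpσ⟩ := Pclass.exists_mem_Rclass hp
  have hfσ : f ∈ Rclass (min σ (max Γ 1)) :=
    Rclass.mem_of_eqOn (fun t ht => (hf t ht).symm)
      (Rclass.add_mem (Rclass_anti (min_le_left _ _) hpσ) (Rclass_anti (min_le_right _ _) hr))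
  exact exists_one_add_rpow_sub_one_eq_add δ (lt_min hσ (by positivity)) (le_max_left Γ 1) hfσ
    hf₁ hp (Rclass.mem_of_eqOn (fun t ht => by rw [hf t ht]; ring) hr)

end Qclass

theorem Qclass_rpow_general (a α δ : ℝ) (ha : 0 < a)
    (g₁ q : ℝ → ℝ) (hpos : ∀ t ∈ Set.Ioo (0 : ℝ) 2, 0 < g₁ t)
    (hq : q ∈ Qclass α α)
    (hg₁ : ∀ t ∈ Set.Ioo (0 : ℝ) 2, g₁ t = a * t ^ α + q t) :
    (fun t : ℝ => g₁ t ^ δ - a ^ δ * t ^ (α * δ)) ∈ Qclass (α * δ) (α * δ) := by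
  set u := fun t => a⁻¹ * t ^ (-α) * q t
  have hu : u ∈ Qclass 0 0 := by simpa using Qclass.const_mul_rpow_mul_mem a⁻¹ (-α) hq
  have hg₁u : ∀ t ∈ Ioo (0 : ℝ) 2, g₁ t = a * t ^ α * (1 + u t) := by
    intro t ht
    have htα := Real.rpow_pos_of_pos ht.1 α
    simp only [u, hg₁ t ht, Real.rpow_neg ht.1.le]
    field_simp
  have hatα : ∀ t ∈ Ioo (0 : ℝ) 2, 0 < a * t ^ α := fun t ht =>
    mul_pos ha (Real.rpow_pos_of_pos ht.1 α)
  have hu₁ : ∀ t ∈ Ioo (0 : ℝ) 2, -1 < u t := fun t ht => by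
    linarith [pos_of_mul_pos_right (hg₁u t ht ▸ hpos t ht) (hatα t ht).le]
  have h := Qclass.const_mul_rpow_mul_mem (a ^ δ) (α * δ) (Qclass.one_add_rpow_sub_one_mem δ hu hu₁)
  rw [add_zero] at h
  refine Qclass.mem_of_eqOn (fun t ht => ?_) h
  rw [hg₁u t ht, Real.mul_rpow (hatα t ht).le (by linarith [hu₁ t ht]),
    Real.mul_rpow ha.le (Real.rpow_pos_of_pos ht.1 α).le, ← Real.rpow_mul ht.1.le]
  ring

/-- composition with a power: if `g₁(t) = a t^α + Q_{α,α}(t)` is positive on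
`(0,2)`, then `g₁(t)^δ = a^δ t^{αδ} + Q_{αδ,αδ}(t)`. -/
theorem Qclass_rpow (a α δ : ℝ) (ha : 0 < a) (hα : 0 < α) (hδ : 0 < δ)
    (g₁ q : ℝ → ℝ) (hpos : ∀ t ∈ Set.Ioo (0 : ℝ) 2, 0 < g₁ t)
    (hq : q ∈ Qclass α α)
    (hg₁ : ∀ t ∈ Set.Ioo (0 : ℝ) 2, g₁ t = a * t ^ α + q t) :
    (fun t : ℝ => g₁ t ^ δ - a ^ δ * t ^ (α * δ)) ∈ Qclass (α * δ) (α * δ) :=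
  Qclass_rpow_general a α δ ha g₁ q hpos hq hg₁
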